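/- arXiv:math-ph/0012036 — 2 statements merged into one kernel-verified Lean document; each statement's English description precedes it below -/
import Mathlib

section
/- Let V be a finite-dimensional real vector space with a nondegenerate symmetric bilinear form g, and let W be a subspace with radical Rad(W) = W ∩ W^⊥ of dimension r. Then there exists a subspace L of V with dim L = r such that g restricted to Rad(W) × Rad(W) and L × L vanishes, L ∩ W = {0}, and the pairing g : Rad(W) × L → ℝ is nondegenerate (i.e., L is a 'lightlike transversal' complement dually paired with Rad(W)). -/
/-!
Let `R = W ⊓ Wᗮ`. Then `W ≤ Rᗮ`, so any complement `L₀` of `Rᗮ` meets `W` trivially, and by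
nondegeneracy `g` pairs `R` with `L₀` perfectly. This pairing yields a linear `ρ : L₀ → R` with
`g (ρ y) z = -½ g y z` on `L₀`, and the graph `{y + ρ y}` of `ρ` is again a complement of `Rᗮ`
(as `R ≤ Rᗮ`) in which the two cross terms cancel `g y z`, i.e. it is totally isotropic.
-/

open Module

namespace Submodule

variable {R M : Type*} [Ring R] [AddCommGroup M] [Module R M] {p q : Submodule R M}

theorem isCompl_range_subtype_add (h : IsCompl p q) (f : p →ₗ[R] M) (hf : ∀ y, f y ∈ q) :
    IsCompl (LinearMap.range (p.subtype + f)) q := by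
  constructor
  · rw [disjoint_def]
    rintro _ ⟨y, rfl⟩ hyq
    have hy : (y : M) ∈ q := by simpa using q.sub_mem hyq (hf y)
    have hy0 : y = 0 := Subtype.ext (disjoint_def.mp h.disjoint y y.2 hy)
    simp [hy0]
  · rw [codisjoint_iff, eq_top_iff]
    intro v _
    obtain ⟨y, hy, w, hw, rfl⟩ := mem_sup.mp (h.sup_eq_top ▸ mem_top : v ∈ p ⊔ q)
    exact mem_sup.mpr ⟨_, ⟨⟨y, hy⟩, rfl⟩, _, q.sub_mem hw (hf ⟨y, hy⟩), by simp⟩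

end Submodule

namespace LinearMap.BilinForm

variable {K V : Type*} [Field K] [AddCommGroup V] [Module K V] {B : LinearMap.BilinForm K V}
  {R L : Submodule K V}

theorem eq_zero_of_codisjoint_orthogonal (hB : B.SeparatingLeft)
    (hL : Codisjoint L (B.orthogonal R)) {x : V} (hx : x ∈ R) (hxL : ∀ y ∈ L, B x y = 0) :
    x = 0 := by
  refine hB x fun v => ?_
  obtain ⟨y, hy, w, hw, rfl⟩ :=
    Submodule.mem_sup.mp (hL.eq_top ▸ Submodule.mem_top : v ∈ L ⊔ B.orthogonal R)
  rw [map_add, hxL y hy, hw x hx, add_zero]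

variable [FiniteDimensional K V]

theorem finrank_eq_of_isCompl_orthogonal (hB : B.Nondegenerate)
    (hL : IsCompl L (B.orthogonal R)) : finrank K L = finrank K R := by
  have hsum := Submodule.finrank_add_eq_of_isCompl hL
  have horth := finrank_orthogonal hB R
  have hle := R.finrank_le
  omega

theorem bijective_domRestrict₁₂_of_isCompl_orthogonal (hB : B.Nondegenerate)
    (hL : IsCompl L (B.orthogonal R)) :
    Function.Bijective (B.domRestrict₁₂ R L : R →ₗ[K] Dual K L) := by
  have hinj : Function.Injective (B.domRestrict₁₂ R L : R →ₗ[K] Dual K L) := by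
    rw [← LinearMap.ker_eq_bot, eq_bot_iff]
    rintro ⟨x, hx⟩ hx0
    have := eq_zero_of_codisjoint_orthogonal hB.1 hL.codisjoint hx fun y hy =>
      LinearMap.congr_fun (LinearMap.mem_ker.mp hx0) ⟨y, hy⟩
    simp [this]
  refine ⟨hinj, (LinearMap.injective_iff_surjective_of_finrank_eq_finrank ?_).mp hinj⟩
  rw [Subspace.dual_finrank_eq, finrank_eq_of_isCompl_orthogonal hB hL]

theorem exists_isotropic_isCompl_orthogonal [NeZero (2 : K)] (hB : B.Nondegenerate)
    (hBs : B.IsSymm) (hR : R ≤ B.orthogonal R) :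
    ∃ L : Submodule K V, L ≤ B.orthogonal L ∧ IsCompl L (B.orthogonal R) := by
  obtain ⟨L₀, hL₀⟩ := (B.orthogonal R).exists_isCompl
  replace hL₀ := hL₀.symm
  let e := LinearEquiv.ofBijective _ (bijective_domRestrict₁₂_of_isCompl_orthogonal hB hL₀)
  let ρ : L₀ →ₗ[K] R :=
    -(2⁻¹ : K) • (e.symm.toLinearMap ∘ₗ (B.restrict L₀ : L₀ →ₗ[K] Dual K L₀))
  have hρ : ∀ y z : L₀, B (ρ y) z = -(2⁻¹ * B y z) := by
    intro y z
    have he : e (ρ y) = -(2⁻¹ : K) • (B.restrict L₀ y : Dual K L₀) := by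
      simp only [ρ, LinearMap.smul_apply, LinearMap.comp_apply, map_smul,
        LinearEquiv.coe_coe, LinearEquiv.apply_symm_apply]
    calc B (ρ y) z = e (ρ y) z := rfl
      _ = -(2⁻¹ * B y z) := by rw [he]; simp
  refine ⟨LinearMap.range (L₀.subtype + R.subtype ∘ₗ ρ), ?_,
    Submodule.isCompl_range_subtype_add hL₀ _ fun y => hR (ρ y).2⟩
  rintro _ ⟨y, rfl⟩ _ ⟨z, rfl⟩
  have hρρ : B (ρ z) (ρ y) = 0 := hR (ρ y).2 _ (ρ z).2
  simp only [LinearMap.add_apply, LinearMap.comp_apply, Submodule.subtype_apply, map_add,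
    hBs.eq (z : V) (ρ y), hBs.eq (z : V) y, hρ, hρρ]
  field_simp
  ring

end LinearMap.BilinForm

theorem exists_lightlike_transversal {V : Type*} [AddCommGroup V] [Module ℝ V]
    [FiniteDimensional ℝ V] (g : LinearMap.BilinForm ℝ V)
    (hsymm : g.IsSymm) (hnd : g.Nondegenerate)
    (W : Submodule ℝ V) (r : ℕ)
    (hr : finrank ℝ (W ⊓ g.orthogonal W : Submodule ℝ V) = r) :
    ∃ L : Submodule ℝ V, finrank ℝ L = r ∧
      (∀ x ∈ W ⊓ g.orthogonal W, ∀ y ∈ W ⊓ g.orthogonal W, g x y = 0) ∧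
      (∀ x ∈ L, ∀ y ∈ L, g x y = 0) ∧
      L ⊓ W = ⊥ ∧
      (∀ x ∈ W ⊓ g.orthogonal W, (∀ y ∈ L, g x y = 0) → x = 0) ∧
      (∀ y ∈ L, (∀ x ∈ W ⊓ g.orthogonal W, g x y = 0) → y = 0) := by
  set R := W ⊓ g.orthogonal W
  have hR : R ≤ g.orthogonal R := fun y hy x hx => hy.2 x hx.1
  have hWR : W ≤ g.orthogonal R := fun w hw x hx => hsymm.isRefl w x (hx.2 w hw)
  obtain ⟨L, hL, hLR⟩ := g.exists_isotropic_isCompl_orthogonal hnd hsymm hR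
  exact ⟨L, (g.finrank_eq_of_isCompl_orthogonal hnd hLR).trans hr,
    fun x hx y hy => hR hy x hx, fun x hx y hy => hL hy x hx,
    disjoint_iff.mp (hLR.disjoint.mono_right hWR),
    fun x hx hxL => g.eq_zero_of_codisjoint_orthogonal hnd.1 hLR.codisjoint hx hxL,
    fun y hy hyR => Submodule.disjoint_def.mp hLR.disjoint y hy hyR⟩
end

section
/- Let V be a finite-dimensional real vector space with nondegenerate symmetric bilinear form g and W a subspace with radical R = W ∩ W^⊥. Choose a nondegenerate complement S of R in W and a nondegenerate complement S' of R in W^⊥ (a 'screen transversal' subspace), and a totally isotropic subspace L dually paired with R as above. Then V decomposes as a direct sum V = S ⊕ S' ⊕ (R ⊕ L), where S, S', and R ⊕ L are mutually g-orthogonal. -/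
/-!
S ⊆ W, S' ⊆ W^⊥ and R ⊆ W ∩ W^⊥ give all orthogonality relations, with L ⟂ S, S' assumed.
The sums are direct because a subspace on which g is nondegenerate meets its orthogonal trivially,
and because R is totally isotropic while no nonzero vector of L is orthogonal to R. They span V
by counting: dim S + dim S' + dim R + dim L = (dim W - r) + (dim V - dim W - r) + r + dim L, and the
pairing R → L* is injective, so dim L ≥ r = dim R.
-/

open Module

theorem LinearMap.SeparatingLeft.finrank_le {K M N : Type*} [Field K] [AddCommGroup M]
    [Module K M] [AddCommGroup N] [Module K N] [FiniteDimensional K N]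
    {B : M →ₗ[K] N →ₗ[K] K} (hB : B.SeparatingLeft) : finrank K M ≤ finrank K N :=
  (LinearMap.finrank_le_finrank_of_injective
    (LinearMap.ker_eq_bot.1 (LinearMap.separatingLeft_iff_ker_eq_bot.1 hB))).trans_eq
    Subspace.dual_finrank_eq

theorem Submodule.finrank_sup_of_disjoint {K V : Type*} [DivisionRing K] [AddCommGroup V]
    [Module K V] {s t : Submodule K V} [FiniteDimensional K s] [FiniteDimensional K t]
    (h : Disjoint s t) : finrank K ↥(s ⊔ t) = finrank K s + finrank K t := by
  rw [← Submodule.finrank_sup_add_finrank_inf_eq, h.eq_bot, finrank_bot, add_zero]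

namespace LinearMap.BilinForm

variable {R M : Type*} [CommRing R] [AddCommGroup M] [Module R M] {B : LinearMap.BilinForm R M}

theorem IsRefl.le_orthogonal_of_le_orthogonal (hB : B.IsRefl) {N P : Submodule R M}
    (h : N ≤ B.orthogonal P) : P ≤ B.orthogonal N :=
  fun _ hp _ hn => hB _ _ (h hn _ hp)

theorem disjoint_of_le_orthogonal {S T : Submodule R M} (hS : (B.restrict S).SeparatingRight)
    (hT : T ≤ B.orthogonal S) : Disjoint S T :=
  Submodule.disjoint_def.2 fun x hxS hxT =>
    congrArg Subtype.val (hS ⟨x, hxS⟩ fun n => hT hxT n n.2)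

end LinearMap.BilinForm

open LinearMap.BilinForm

theorem lightlike_decomposition_general {V : Type*} [AddCommGroup V] [Module ℝ V]
    [FiniteDimensional ℝ V] (g : LinearMap.BilinForm ℝ V)
    (hsymm : g.IsSymm) (hnd : g.Nondegenerate)
    (W R S S' L : Submodule ℝ V)
    (hR : R = W ⊓ g.orthogonal W)
    -- S is a nondegenerate complement of R in W
    (hRSsup : R ⊔ S = W)
    (hSnd : (g.restrict S).Nondegenerate)
    -- S' is a nondegenerate (screen transversal) complement of R in W^⊥
    (hRS'sup : R ⊔ S' = g.orthogonal W)
    (hS'nd : (g.restrict S').Nondegenerate)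
    -- L is totally isotropic, dually paired with R, and orthogonal to S and S'
    (hLS : L ≤ g.orthogonal S ⊓ g.orthogonal S')
    (hpair₁ : ∀ x ∈ R, (∀ y ∈ L, g x y = 0) → x = 0)
    (hpair₂ : ∀ y ∈ L, (∀ x ∈ R, g x y = 0) → y = 0) :
    -- V = S ⊕ S' ⊕ (R ⊕ L), the three factors mutually g-orthogonal
    S ⊔ (S' ⊔ (R ⊔ L)) = ⊤ ∧
      S ⊓ (S' ⊔ (R ⊔ L)) = ⊥ ∧ S' ⊓ (R ⊔ L) = ⊥ ∧ R ⊓ L = ⊥ ∧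
      (∀ x ∈ S, ∀ y ∈ S', g x y = 0) ∧
      (∀ x ∈ S, ∀ y ∈ R ⊔ L, g x y = 0) ∧
      (∀ x ∈ S', ∀ y ∈ R ⊔ L, g x y = 0) := by
  have hRW : R ≤ W := hR ▸ inf_le_left
  have hRW' : R ≤ g.orthogonal W := hR ▸ inf_le_right
  have hSW : S ≤ W := hRSsup ▸ le_sup_right
  have hS'W : S' ≤ g.orthogonal W := hRS'sup ▸ le_sup_right
  have hS'S : S' ≤ g.orthogonal S := hS'W.trans (orthogonal_le hSW)
  have hRS : R ≤ g.orthogonal S := hRW'.trans (orthogonal_le hSW)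
  have hRS' : R ≤ g.orthogonal S' :=
    hsymm.isRefl.le_orthogonal_of_le_orthogonal (hS'W.trans (orthogonal_le hRW))
  have hRLS : R ⊔ L ≤ g.orthogonal S := sup_le hRS (hLS.trans inf_le_left)
  have hRLS' : R ⊔ L ≤ g.orthogonal S' := sup_le hRS' (hLS.trans inf_le_right)
  have hRL : Disjoint R L :=
    Submodule.disjoint_def.2 fun x hxR hxL => hpair₂ x hxL fun r hr => hRW' hxR r (hRW hr)
  have hS'RL : Disjoint S' (R ⊔ L) := disjoint_of_le_orthogonal hS'nd.2 hRLS'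
  have hSdisj : Disjoint S (S' ⊔ (R ⊔ L)) := disjoint_of_le_orthogonal hSnd.2 (sup_le hS'S hRLS)
  have hdimW : finrank ℝ R + finrank ℝ S = finrank ℝ W := by
    rw [← hRSsup, Submodule.finrank_sup_of_disjoint (disjoint_of_le_orthogonal hSnd.2 hRS).symm]
  have hdimW' : finrank ℝ R + finrank ℝ S' = finrank ℝ V - finrank ℝ W := by
    rw [← finrank_orthogonal hnd, ← hRS'sup,
      Submodule.finrank_sup_of_disjoint (disjoint_of_le_orthogonal hS'nd.2 hRS').symm]
  have hRL_finrank : finrank ℝ R ≤ finrank ℝ L :=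
    LinearMap.SeparatingLeft.finrank_le (B := g.domRestrict₁₂ R L)
      fun x hx => Subtype.ext (hpair₁ x x.2 fun y hy => hx ⟨y, hy⟩)
  refine ⟨Submodule.eq_top_of_disjoint _ _ ?_ hSdisj, hSdisj.eq_bot, hS'RL.eq_bot, hRL.eq_bot,
    fun x hx y hy => hS'S hy x hx, fun x hx y hy => hRLS hy x hx, fun x hx y hy => hRLS' hy x hx⟩
  rw [Submodule.finrank_sup_of_disjoint hS'RL, Submodule.finrank_sup_of_disjoint hRL]
  have := Submodule.finrank_le W
  omega

theorem lightlike_decomposition {V : Type*} [AddCommGroup V] [Module ℝ V]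
    [FiniteDimensional ℝ V] (g : LinearMap.BilinForm ℝ V)
    (hsymm : g.IsSymm) (hnd : g.Nondegenerate)
    (W R S S' L : Submodule ℝ V)
    (hR : R = W ⊓ g.orthogonal W)
    -- S is a nondegenerate complement of R in W
    (hSW : S ≤ W) (hRS : R ⊓ S = ⊥) (hRSsup : R ⊔ S = W)
    (hSnd : (g.restrict S).Nondegenerate)
    -- S' is a nondegenerate (screen transversal) complement of R in W^⊥
    (hS'W : S' ≤ g.orthogonal W) (hRS' : R ⊓ S' = ⊥) (hRS'sup : R ⊔ S' = g.orthogonal W)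
    (hS'nd : (g.restrict S').Nondegenerate)
    -- L is totally isotropic, dually paired with R, and orthogonal to S and S'
    (hLiso : ∀ x ∈ L, ∀ y ∈ L, g x y = 0)
    (hLS : L ≤ g.orthogonal S ⊓ g.orthogonal S')
    (hpair₁ : ∀ x ∈ R, (∀ y ∈ L, g x y = 0) → x = 0)
    (hpair₂ : ∀ y ∈ L, (∀ x ∈ R, g x y = 0) → y = 0) :
    -- V = S ⊕ S' ⊕ (R ⊕ L), the three factors mutually g-orthogonal
    S ⊔ (S' ⊔ (R ⊔ L)) = ⊤ ∧
      S ⊓ (S' ⊔ (R ⊔ L)) = ⊥ ∧ S' ⊓ (R ⊔ L) = ⊥ ∧ R ⊓ L = ⊥ ∧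
      (∀ x ∈ S, ∀ y ∈ S', g x y = 0) ∧
      (∀ x ∈ S, ∀ y ∈ R ⊔ L, g x y = 0) ∧
      (∀ x ∈ S', ∀ y ∈ R ⊔ L, g x y = 0) :=
  lightlike_decomposition_general g hsymm hnd W R S S' L hR hRSsup hSnd hRS'sup hS'nd hLS hpair₁
    hpair₂
end
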